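/- Let X be a Banach A-bimodule such that for every x'' ∈ X**, the map a'' ↦ x''a'' from A** to X** is weak-star to weak continuous. If D : A → X* is a bounded derivation, then D''(A**)·X** ⊆ A*, i.e., for every a'' ∈ A** and x'' ∈ X**, the functional D''(a'')x'' ∈ A*** lies in the canonical image of A*. -/

import Mathlib

set_option maxHeartbeats 1000000

open Filter Topology ContinuousLinearMap NormedSpace

noncomputable section ArensSetup

/-- Shortcut instances on iterated duals of a real normed space (porting aid: without them the
iterated duals below no longer elaborate; they are the instances Mathlib already provides). -/
instance instSeminormedAddCommGroupStrongDualReal {E : Type*} [SeminormedAddCommGroup E]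
    [NormedSpace ℝ E] : SeminormedAddCommGroup (StrongDual ℝ E) := inferInstance

instance instNormedSpaceStrongDualReal {E : Type*} [SeminormedAddCommGroup E]
    [NormedSpace ℝ E] : NormedSpace ℝ (StrongDual ℝ E) := inferInstance

instance instTopologicalSpaceStrongDualReal {E : Type*} [SeminormedAddCommGroup E]
    [NormedSpace ℝ E] : TopologicalSpace (StrongDual ℝ E) := inferInstance

instance instSeminormedAddCommGroupStrongDualReal2 {E : Type*} [SeminormedAddCommGroup E]
    [NormedSpace ℝ E] : SeminormedAddCommGroup (StrongDual ℝ (StrongDual ℝ E)) := inferInstance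

instance instNormedSpaceStrongDualReal2 {E : Type*} [SeminormedAddCommGroup E]
    [NormedSpace ℝ E] : NormedSpace ℝ (StrongDual ℝ (StrongDual ℝ E)) := inferInstance

instance instTopologicalSpaceStrongDualReal2 {E : Type*} [SeminormedAddCommGroup E]
    [NormedSpace ℝ E] : TopologicalSpace (StrongDual ℝ (StrongDual ℝ E)) := inferInstance

instance instSeminormedAddCommGroupStrongDualReal3 {E : Type*} [SeminormedAddCommGroup E]
    [NormedSpace ℝ E] : SeminormedAddCommGroup (StrongDual ℝ (StrongDual ℝ (StrongDual ℝ E))) := inferInstance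

instance instNormedSpaceStrongDualReal3 {E : Type*} [SeminormedAddCommGroup E]
    [NormedSpace ℝ E] : NormedSpace ℝ (StrongDual ℝ (StrongDual ℝ (StrongDual ℝ E))) := inferInstance

instance instTopologicalSpaceStrongDualReal3 {E : Type*} [SeminormedAddCommGroup E]
    [NormedSpace ℝ E] : TopologicalSpace (StrongDual ℝ (StrongDual ℝ (StrongDual ℝ E))) := inferInstance


/-- The adjoint (transpose) of a continuous linear map between normed spaces. -/
def adjCLM {E F : Type*} [SeminormedAddCommGroup E] [NormedSpace ℝ E]
    [SeminormedAddCommGroup F] [NormedSpace ℝ F] (T : E →L[ℝ] F) :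
    StrongDual ℝ F →L[ℝ] StrongDual ℝ E :=
  (ContinuousLinearMap.compL ℝ E F ℝ).flip T

@[simp] theorem adjCLM_apply {E F : Type*} [SeminormedAddCommGroup E] [NormedSpace ℝ E]
    [SeminormedAddCommGroup F] [NormedSpace ℝ F] (T : E →L[ℝ] F) (g : StrongDual ℝ F) (x : E) :
    adjCLM T g x = g (T x) := rfl

/-- One-step Arens-type adjoint of a bounded bilinear map:
`ext1 β g' e = g' ∘ (β e)`. -/
def ext1 {E F G : Type*} [SeminormedAddCommGroup E] [NormedSpace ℝ E]
    [SeminormedAddCommGroup F] [NormedSpace ℝ F] [SeminormedAddCommGroup G] [NormedSpace ℝ G]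
    (β : E →L[ℝ] F →L[ℝ] G) : StrongDual ℝ G →L[ℝ] E →L[ℝ] StrongDual ℝ F :=
  ((ContinuousLinearMap.compL ℝ F G ℝ).flip.comp β).flip

@[simp] theorem ext1_apply {E F G : Type*} [SeminormedAddCommGroup E] [NormedSpace ℝ E]
    [SeminormedAddCommGroup F] [NormedSpace ℝ F] [SeminormedAddCommGroup G] [NormedSpace ℝ G]
    (β : E →L[ℝ] F →L[ℝ] G) (g' : StrongDual ℝ G) (e : E) (f : F) :
    ext1 β g' e f = g' (β e f) := rfl

/-- Triple adjoint: the (first) Arens extension of a bounded bilinear map to the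
second duals. -/
def ext3 {E F G : Type*} [SeminormedAddCommGroup E] [NormedSpace ℝ E]
    [SeminormedAddCommGroup F] [NormedSpace ℝ F] [SeminormedAddCommGroup G] [NormedSpace ℝ G]
    (β : E →L[ℝ] F →L[ℝ] G) :
    StrongDual ℝ (StrongDual ℝ E) →L[ℝ] StrongDual ℝ (StrongDual ℝ F) →L[ℝ] StrongDual ℝ (StrongDual ℝ G) :=
  ext1 (ext1 (ext1 β))

variable (A : Type*) [NonUnitalNormedRing A] [NormedSpace ℝ A]
  [SMulCommClass ℝ A A] [IsScalarTower ℝ A A] [CompleteSpace A]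

/-- The first (left) Arens product on `A**`: `⟨a''b'', a'⟩ = ⟨a'', b''a'⟩`. -/
def fArens : StrongDual ℝ (StrongDual ℝ A) →L[ℝ] StrongDual ℝ (StrongDual ℝ A) →L[ℝ] StrongDual ℝ (StrongDual ℝ A) :=
  ext3 (ContinuousLinearMap.mul ℝ A)

/-- The second (right) Arens product on `A**`: `⟨a''∘b'', a'⟩ = ⟨b'', a'∘a''⟩`. -/
def sArens : StrongDual ℝ (StrongDual ℝ A) →L[ℝ] StrongDual ℝ (StrongDual ℝ A) →L[ℝ] StrongDual ℝ (StrongDual ℝ A) :=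
  (ext3 (ContinuousLinearMap.mul ℝ A).flip).flip

/-- `A` is Arens regular when the two Arens products on `A**` coincide. -/
def ArensRegular : Prop := fArens A = sArens A

variable {A}

/-- Weak-star to weak continuity for a map from the dual of `E` into `F`. -/
def WStarToWCont {E F : Type*} [SeminormedAddCommGroup E] [NormedSpace ℝ E]
    [SeminormedAddCommGroup F] [NormedSpace ℝ F] (f : StrongDual ℝ E → F) : Prop :=
  Continuous fun x : WeakDual ℝ E => toWeakSpace ℝ F (f (WeakDual.toStrongDual x))

variable (A)

/-- The second adjoint `T'' : A** → A**` of `T : A → A`. -/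
def secondAdj (T : A →L[ℝ] A) : StrongDual ℝ (StrongDual ℝ A) →L[ℝ] StrongDual ℝ (StrongDual ℝ A) :=
  adjCLM (adjCLM T)

/-- Left action of `A` on `A*`: `⟨a·a', b⟩ = ⟨a', ba⟩`. -/
def dualLeft : A →L[ℝ] StrongDual ℝ A →L[ℝ] StrongDual ℝ A :=
  (ext1 (ContinuousLinearMap.mul ℝ A).flip).flip

/-- Right action of `A` on `A*`: `⟨a'·a, b⟩ = ⟨a', ab⟩`. -/
def dualRight : StrongDual ℝ A →L[ℝ] A →L[ℝ] StrongDual ℝ A :=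
  ext1 (ContinuousLinearMap.mul ℝ A)

/-- Left action of `A**` (first Arens product) on `A***`. -/
def dualLeft2 : StrongDual ℝ (StrongDual ℝ A) →L[ℝ] StrongDual ℝ (StrongDual ℝ (StrongDual ℝ A)) →L[ℝ]
    StrongDual ℝ (StrongDual ℝ (StrongDual ℝ A)) :=
  (ext1 (fArens A).flip).flip

/-- Right action of `A**` (first Arens product) on `A***`. -/
def dualRight2 : StrongDual ℝ (StrongDual ℝ (StrongDual ℝ A)) →L[ℝ] StrongDual ℝ (StrongDual ℝ A) →L[ℝ]
    StrongDual ℝ (StrongDual ℝ (StrongDual ℝ A)) :=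
  ext1 (fArens A)

end ArensSetup

section BimoduleSetup

set_option maxHeartbeats 1000000

open Filter Topology ContinuousLinearMap NormedSpace

/-- A Banach `A`-bimodule: bounded bilinear left and right actions satisfying the
usual compatibility axioms. -/
structure BanachBimodule (A X : Type*) [NonUnitalNormedRing A] [NormedSpace ℝ A]
    [SMulCommClass ℝ A A] [IsScalarTower ℝ A A]
    [NormedAddCommGroup X] [NormedSpace ℝ X] [CompleteSpace X] where
  l : A →L[ℝ] X →L[ℝ] X
  r : X →L[ℝ] A →L[ℝ] X
  l_mul : ∀ a b x, l (a * b) x = l a (l b x)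
  r_mul : ∀ x a b, r (r x a) b = r x (a * b)
  l_r : ∀ a x b, l a (r x b) = r (l a x) b

variable {A X : Type*} [NonUnitalNormedRing A] [NormedSpace ℝ A]
  [SMulCommClass ℝ A A] [IsScalarTower ℝ A A] [CompleteSpace A]
  [NormedAddCommGroup X] [NormedSpace ℝ X] [CompleteSpace X]

/-- Left action of `A` on `X*`: `⟨a·f, x⟩ = ⟨f, x·a⟩`. -/
noncomputable def modDualLeft (M : BanachBimodule A X) : A →L[ℝ] StrongDual ℝ X →L[ℝ] StrongDual ℝ X :=
  (ext1 M.r.flip).flip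

/-- Right action of `A` on `X*`: `⟨f·a, x⟩ = ⟨f, a·x⟩`. -/
noncomputable def modDualRight (M : BanachBimodule A X) : StrongDual ℝ X →L[ℝ] A →L[ℝ] StrongDual ℝ X :=
  ext1 M.l

/-- Left action of `A**` on `X**` (first Arens extension). -/
noncomputable def modL2 (M : BanachBimodule A X) :
    StrongDual ℝ (StrongDual ℝ A) →L[ℝ] StrongDual ℝ (StrongDual ℝ X) →L[ℝ] StrongDual ℝ (StrongDual ℝ X) :=
  ext3 M.l

/-- Right action of `A**` on `X**` (first Arens extension); `modR2 M x'' a'' = x''a''`. -/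
noncomputable def modR2 (M : BanachBimodule A X) :
    StrongDual ℝ (StrongDual ℝ X) →L[ℝ] StrongDual ℝ (StrongDual ℝ A) →L[ℝ] StrongDual ℝ (StrongDual ℝ X) :=
  ext3 M.r

/-- Left action of `A**` on `X***`: `⟨a''·x''', x''⟩ = ⟨x''', x''a''⟩`. -/
noncomputable def modL3 (M : BanachBimodule A X) :
    StrongDual ℝ (StrongDual ℝ A) →L[ℝ] StrongDual ℝ (StrongDual ℝ (StrongDual ℝ X)) →L[ℝ] StrongDual ℝ (StrongDual ℝ (StrongDual ℝ X)) :=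
  (ext1 (modR2 M).flip).flip

/-- Right action of `A**` on `X***`: `⟨x'''·a'', x''⟩ = ⟨x''', a''x''⟩`. -/
noncomputable def modR3 (M : BanachBimodule A X) :
    StrongDual ℝ (StrongDual ℝ (StrongDual ℝ X)) →L[ℝ] StrongDual ℝ (StrongDual ℝ A) →L[ℝ] StrongDual ℝ (StrongDual ℝ (StrongDual ℝ X)) :=
  ext1 (modL2 M)

end BimoduleSetup

section DerivationSetup

variable {B Y : Type*} [SeminormedAddCommGroup B] [NormedSpace ℝ B]
  [SeminormedAddCommGroup Y] [NormedSpace ℝ Y]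

/-- `D` is a derivation with respect to the multiplication `m` and the module
actions `l`, `r`. -/
def IsDeriv (m : B →L[ℝ] B →L[ℝ] B) (l : B →L[ℝ] Y →L[ℝ] Y)
    (r : Y →L[ℝ] B →L[ℝ] Y) (D : B →L[ℝ] Y) : Prop :=
  ∀ a b, D (m a b) = l a (D b) + r (D a) b

/-- `D` is an inner derivation: `D a = a·y − y·a` for some fixed `y`. -/
def IsInner (l : B →L[ℝ] Y →L[ℝ] Y) (r : Y →L[ℝ] B →L[ℝ] Y) (D : B →L[ℝ] Y) : Prop :=
  ∃ y, ∀ a, D a = l a y - r y a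

/-- `D` is a `T-S`-derivation: `D(ab) = T(a)·D(b) + D(a)·S(b)`. -/
def IsTSDeriv (m : B →L[ℝ] B →L[ℝ] B) (l : B →L[ℝ] Y →L[ℝ] Y)
    (r : Y →L[ℝ] B →L[ℝ] Y) (T S : B →L[ℝ] B) (D : B →L[ℝ] Y) : Prop :=
  ∀ a b, D (m a b) = l (T a) (D b) + r (D a) (S b)

/-- `D` is an inner `T-S`-derivation: `D a = T(a)·y − y·S(a)` for some fixed `y`. -/
def IsTSInner (l : B →L[ℝ] Y →L[ℝ] Y) (r : Y →L[ℝ] B →L[ℝ] Y)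
    (T S : B →L[ℝ] B) (D : B →L[ℝ] Y) : Prop :=
  ∃ y, ∀ a, D a = l (T a) y - r y (S a)

end DerivationSetup


theorem NormedSpace.exists_eq_inclusionInDoubleDual_of_continuous_weakDual {𝕜 E : Type*}
    [NontriviallyNormedField 𝕜] [SeminormedAddCommGroup E] [NormedSpace 𝕜 E]
    (g : StrongDual 𝕜 (StrongDual 𝕜 E))
    (hg : Continuous fun φ : WeakDual 𝕜 E => g (WeakDual.toStrongDual φ)) :
    ∃ x : E, g = inclusionInDoubleDual 𝕜 E x := by
  obtain ⟨x, hx⟩ := LinearMap.dualEmbedding_surjective (topDualPairing 𝕜 E)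
    ⟨g.toLinearMap ∘ₗ WeakDual.toStrongDual.toLinearMap, hg⟩
  exact ⟨x, ContinuousLinearMap.ext fun φ => (DFunLike.congr_fun hx φ).symm⟩

theorem WStarToWCont.continuous_comp_dual {E F : Type*} [SeminormedAddCommGroup E]
    [NormedSpace ℝ E] [SeminormedAddCommGroup F] [NormedSpace ℝ F] {T : StrongDual ℝ E → F}
    (hT : WStarToWCont T) (f : StrongDual ℝ F) :
    Continuous fun φ : WeakDual ℝ E => f (T (WeakDual.toStrongDual φ)) :=
  (WeakBilin.eval_continuous _ f).comp hT

section Statements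
set_option maxHeartbeats 1000000
open Filter Topology ContinuousLinearMap NormedSpace

variable {A : Type*} [NonUnitalNormedRing A] [NormedSpace ℝ A]
  [SMulCommClass ℝ A A] [IsScalarTower ℝ A A] [CompleteSpace A]

variable {X : Type*} [NormedAddCommGroup X] [NormedSpace ℝ X] [CompleteSpace X]

theorem secondAdjoint_range_prod_subset_general (M : BanachBimodule A X)
    (hw : ∀ x'' : StrongDual ℝ (StrongDual ℝ X), WStarToWCont (fun a'' => modR2 M x'' a''))
    (D : A →L[ℝ] StrongDual ℝ X) :
    ∀ (a'' : StrongDual ℝ (StrongDual ℝ A)) (x'' : StrongDual ℝ (StrongDual ℝ X)), ∃ a' : StrongDual ℝ A,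
      (adjCLM (adjCLM D) a'').comp (modR2 M x'') = inclusionInDoubleDual ℝ (StrongDual ℝ A) a' := by
  intro a'' x''
  exact NormedSpace.exists_eq_inclusionInDoubleDual_of_continuous_weakDual _
    ((hw x'').continuous_comp_dual (adjCLM (adjCLM D) a''))

/-- If `a'' ↦ x''a''` is weak-star to weak continuous for all `x'' ∈ X**` and
`D : A → X*` is a derivation, then `D''(A**)·X** ⊆ A*`. -/
theorem secondAdjoint_range_prod_subset (M : BanachBimodule A X)
    (hw : ∀ x'' : StrongDual ℝ (StrongDual ℝ X), WStarToWCont (fun a'' => modR2 M x'' a''))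
    (D : A →L[ℝ] StrongDual ℝ X)
    (hD : IsDeriv (ContinuousLinearMap.mul ℝ A) (modDualLeft M) (modDualRight M) D) :
    ∀ (a'' : StrongDual ℝ (StrongDual ℝ A)) (x'' : StrongDual ℝ (StrongDual ℝ X)), ∃ a' : StrongDual ℝ A,
      (adjCLM (adjCLM D) a'').comp (modR2 M x'') = inclusionInDoubleDual ℝ (StrongDual ℝ A) a' :=
  secondAdjoint_range_prod_subset_general M hw D

end Statements
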